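/- arXiv:2401.01890 — 5 statements merged into one kernel-verified Lean document; each statement's English description precedes it below -/
import Mathlib

section
/- The binary operation ⋋ on planar binary rooted trees, defined by t ⋋ w = w ∘₁ (t ∨ |) (grafting the tree t ∨ | onto the leftmost leaf of w), with the empty tree as unit, is associative. -/
open Classical

/-- Planar binary rooted trees. `leaf` is the unique tree `|` with one leaf. -/
inductive PBT : Type
  | leaf : PBT
  | node : PBT → PBT → PBT
  deriving DecidableEq

/-- Number of leaves of a planar binary rooted tree. -/
def leavesCount : PBT → ℕ
  | .leaf => 1
  | .node l r => leavesCount l + leavesCount r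

/-- Graft the tree `w` onto the leftmost (first) leaf of `t`. -/
def graft1 : PBT → PBT → PBT
  | .leaf, w => w
  | .node l r, w => .node (graft1 l w) r

/-- The product `t ⋋ w := w ∘₁ (t ∨ |)`. -/
def lprod (t w : PBT) : PBT := graft1 w (.node t .leaf)

/-- A tree is `⋋`-irreducible if it is not a product of two (nonempty) trees. -/
def Irr (t : PBT) : Prop := ¬ ∃ u w : PBT, t = lprod u w

/-- `⋋` extended to the free monoid with the empty tree (`none`) as unit. -/
def olprod : Option PBT → Option PBT → Option PBT
  | none, b => b
  | a, none => a
  | some t, some w => some (lprod t w)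

theorem graft1_assoc (a b c : PBT) : graft1 (graft1 a b) c = graft1 a (graft1 b c) := by
  induction a with
  | leaf => rfl
  | node l r ih => rw [graft1, graft1, graft1, ih]

theorem lprod_assoc (t u w : PBT) : lprod (lprod t u) w = lprod t (lprod u w) := by
  simp only [lprod, graft1_assoc, graft1]

/-- The operation `⋋`, with the empty tree as unit, is associative. -/
theorem stmt0 (a b c : Option PBT) :
    olprod (olprod a b) c = olprod a (olprod b c) := by
  rcases a with _ | t <;> rcases b with _ | u <;> rcases c with _ | w
  all_goals first | rfl | exact congrArg some (lprod_assoc t u w)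
end

section
/- Every planar binary rooted tree t with at least one leaf can be written uniquely as t = t₁ ⋋ t₂ ⋋ ⋯ ⋋ t_r for a unique positive integer r and a unique family of ⋋-irreducible trees t₁, …, t_r. -/
open Classical

/-! Since `⋋` is associative, splitting a reducible tree into two smaller factors and factoring
both gives existence, by induction on the number of leaves. For uniqueness, `u ⋋ w` is `w` with
its leftmost leaf replaced by `u ∨ |`, so a tree is irreducible exactly when no node on its left
spine has `|` as right child. Hence in `t = u ⋋ w` with `w` irreducible, both factors are read off
from the topmost left-spine node of `t` whose right child is `|`: `w` is `t` with that node replaced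
by `|`, and `u` is its left child. -/

section Factorization

variable {α : Type*} (f : α → α → α)

def IsIndecomposable (a : α) : Prop := ¬ ∃ u w, a = f u w

variable {f}

theorem List.foldl_append_cons_of_associative [Std.Associative f] (a b : α) (l₁ l₂ : List α) :
    (l₁ ++ b :: l₂).foldl f a = f (l₁.foldl f a) (l₂.foldl f b) := by
  rw [List.foldl_append, List.foldl_cons, List.foldl_assoc]

theorem exists_foldl_eq_of_isIndecomposable [Std.Associative f] (μ : α → ℕ)
    (hμl : ∀ a b, μ a < μ (f a b)) (hμr : ∀ a b, μ b < μ (f a b)) (t : α) :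
    ∃ p : α × List α, (∀ s ∈ p.1 :: p.2, IsIndecomposable f s) ∧ p.2.foldl f p.1 = t := by
  induction t using (measure μ).wf.induction with
  | h t ih =>
  by_cases ht : IsIndecomposable f t
  · exact ⟨(t, []), by simpa using ht, rfl⟩
  obtain ⟨u, w, rfl⟩ := not_not.mp ht
  obtain ⟨⟨u₁, us⟩, hu, rfl⟩ := ih u (hμl u w)
  obtain ⟨⟨w₁, ws⟩, hw, rfl⟩ := ih _ (hμr _ w)
  refine ⟨(u₁, us ++ w₁ :: ws), ?_, List.foldl_append_cons_of_associative ..⟩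
  simp only [List.mem_cons, List.mem_append] at hu hw ⊢
  grind

theorem eq_of_foldl_eq_of_isIndecomposable
    (hcancel : ∀ u w u' w', IsIndecomposable f w → IsIndecomposable f w' →
      f u w = f u' w' → u = u' ∧ w = w')
    {a b : α} {l m : List α} (hl : ∀ s ∈ a :: l, IsIndecomposable f s)
    (hm : ∀ s ∈ b :: m, IsIndecomposable f s) (h : l.foldl f a = m.foldl f b) :
    a = b ∧ l = m := by
  induction l using List.reverseRecOn generalizing m with
  | nil =>
    obtain rfl | ⟨m, d, rfl⟩ := m.eq_nil_or_concat'
    · exact ⟨h, rfl⟩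
    · rw [List.foldl_nil, List.foldl_concat] at h
      exact absurd ⟨_, d, h⟩ (hl a (by simp))
  | append_singleton l c ih =>
    obtain rfl | ⟨m, d, rfl⟩ := m.eq_nil_or_concat'
    · rw [List.foldl_nil, List.foldl_concat] at h
      exact absurd ⟨_, c, h.symm⟩ (hm b (by simp))
    · rw [List.foldl_concat, List.foldl_concat] at h
      obtain ⟨hfold, rfl⟩ := hcancel _ _ _ _ (hl c (by simp)) (hm d (by simp)) h
      obtain ⟨rfl, rfl⟩ := ih (fun s hs => hl s (by grind)) (fun s hs => hm s (by grind)) hfold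
      exact ⟨rfl, rfl⟩

theorem existsUnique_foldl_eq_of_isIndecomposable [Std.Associative f] (μ : α → ℕ)
    (hμl : ∀ a b, μ a < μ (f a b)) (hμr : ∀ a b, μ b < μ (f a b))
    (hcancel : ∀ u w u' w', IsIndecomposable f w → IsIndecomposable f w' →
      f u w = f u' w' → u = u' ∧ w = w') (t : α) :
    ∃! p : α × List α, (∀ s ∈ p.1 :: p.2, IsIndecomposable f s) ∧ p.2.foldl f p.1 = t := by
  obtain ⟨p, hp, rfl⟩ := exists_foldl_eq_of_isIndecomposable μ hμl hμr t
  refine ⟨p, ⟨hp, rfl⟩, fun q ⟨hq, hqp⟩ => ?_⟩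
  obtain ⟨h₁, h₂⟩ := eq_of_foldl_eq_of_isIndecomposable hcancel hq hp hqp
  exact Prod.ext h₁ h₂

end Factorization

namespace PBT

@[simp] theorem lprod_leaf (u : PBT) : lprod u leaf = node u leaf := rfl

@[simp] theorem lprod_node (u l r : PBT) : lprod u (node l r) = node (lprod u l) r := rfl

theorem leavesCount_pos (t : PBT) : 0 < leavesCount t := by
  induction t with
  | leaf => exact Nat.one_pos
  | node l r ihl _ => exact Nat.add_pos_left ihl _

theorem leavesCount_lprod (u w : PBT) :
    leavesCount (lprod u w) = leavesCount u + leavesCount w := by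
  induction w with
  | leaf => rfl
  | node l r ih => simp only [lprod_node, leavesCount, ih, Nat.add_assoc]

theorem leavesCount_lt_lprod_left (u w : PBT) : leavesCount u < leavesCount (lprod u w) := by
  rw [leavesCount_lprod]
  exact Nat.lt_add_of_pos_right (leavesCount_pos w)

theorem leavesCount_lt_lprod_right (u w : PBT) : leavesCount w < leavesCount (lprod u w) := by
  rw [leavesCount_lprod]
  exact Nat.lt_add_of_pos_left (leavesCount_pos u)

theorem graft1_assoc (x y z : PBT) : graft1 (graft1 x y) z = graft1 x (graft1 y z) := by
  induction x with
  | leaf => rfl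
  | node l r ih => simp only [graft1, ih]

instance : Std.Associative lprod where
  assoc u a b := by simp only [lprod, graft1_assoc, graft1]

theorem irr_node_iff (l r : PBT) : Irr (node l r) ↔ Irr l ∧ r ≠ leaf := by
  suffices (∃ u w, node l r = lprod u w) ↔ r = leaf ∨ ∃ u w, l = lprod u w by
    simp only [Irr, this, not_or, and_comm]
  constructor
  · rintro ⟨u, _ | ⟨l', r'⟩, h⟩
    · exact Or.inl (node.inj h).2
    · exact Or.inr ⟨u, l', (node.inj h).1⟩
  · rintro (rfl | ⟨u, w, rfl⟩)
    · exact ⟨l, leaf, rfl⟩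
    · exact ⟨u, node w r, rfl⟩

theorem lprod_cancel_of_irr {u w u' w' : PBT} (hw : Irr w) (hw' : Irr w')
    (h : lprod u w = lprod u' w') : u = u' ∧ w = w' := by
  induction w generalizing w' with
  | leaf =>
    cases w' with
    | leaf => exact ⟨(node.inj h).1, rfl⟩
    | node l' r' => exact absurd (node.inj h).2.symm ((irr_node_iff l' r').mp hw').2
  | node l r ih =>
    cases w' with
    | leaf => exact absurd (node.inj h).2 ((irr_node_iff l r).mp hw).2
    | node l' r' =>
      obtain ⟨hl, rfl⟩ := node.inj h
      obtain ⟨rfl, rfl⟩ := ih ((irr_node_iff l r).mp hw).1 ((irr_node_iff l' r).mp hw').1 hl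
      exact ⟨rfl, rfl⟩

end PBT

/-- Every planar binary rooted tree factors uniquely as
`t = t₁ ⋋ t₂ ⋋ ⋯ ⋋ t_r` with each `tᵢ` being `⋋`-irreducible.
The factorization is encoded as a nonempty list `p.1 :: p.2`. -/
theorem stmt2 (t : PBT) :
    ∃! p : PBT × List PBT,
      (∀ s ∈ p.1 :: p.2, Irr s) ∧ List.foldl lprod p.1 p.2 = t :=
  existsUnique_foldl_eq_of_isIndecomposable leavesCount PBT.leavesCount_lt_lprod_left
    PBT.leavesCount_lt_lprod_right (fun _ _ _ _ => PBT.lprod_cancel_of_irr) t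
end

section
/- For n > 2, a planar binary rooted tree t with n leaves is ⋋-irreducible if and only if, writing t = t^l ∨ t^r, the left subtree t^l is ⋋-irreducible and the right subtree t^r has more than one leaf. -/
open Classical

lemma one_le_leavesCount (t : PBT) : 1 ≤ leavesCount t := by
  induction t with
  | leaf => rfl
  | node l r _ _ => simp only [leavesCount]; omega

lemma one_lt_leavesCount_iff (t : PBT) : 1 < leavesCount t ↔ t ≠ .leaf := by
  cases t with
  | leaf => simp [leavesCount]
  | node l r =>
    have := one_le_leavesCount l
    have := one_le_leavesCount r
    simp only [leavesCount, ne_eq, reduceCtorEq, not_false_eq_true, iff_true]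
    omega

lemma lprod_leaf (u : PBT) : lprod u .leaf = .node u .leaf := rfl

lemma lprod_node (u w r : PBT) : lprod u (.node w r) = .node (lprod u w) r := rfl

theorem irr_node_iff (l r : PBT) : Irr (.node l r) ↔ Irr l ∧ r ≠ .leaf := by
  constructor
  · intro hirr
    refine ⟨?_, ?_⟩
    · rintro ⟨u, w, rfl⟩
      exact hirr ⟨u, .node w r, (lprod_node u w r).symm⟩
    · rintro rfl
      exact hirr ⟨l, .leaf, (lprod_leaf l).symm⟩
  · rintro ⟨hl, hr⟩ ⟨u, w, hw⟩
    cases w with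
    | leaf =>
      rw [lprod_leaf] at hw
      exact hr (PBT.node.inj hw).2
    | node wl wr =>
      rw [lprod_node] at hw
      exact hl ⟨u, wl, (PBT.node.inj hw).1⟩

theorem stmt3_general (l r : PBT) :
    Irr (PBT.node l r) ↔ Irr l ∧ 1 < leavesCount r := by
  rw [one_lt_leavesCount_iff]
  exact irr_node_iff l r

/-- For a tree `t = t^l ∨ t^r` with more than two leaves, `t` is
`⋋`-irreducible iff `t^l` is `⋋`-irreducible and `t^r` has more than one leaf. -/
theorem stmt3 (l r : PBT) (h : 2 < leavesCount (PBT.node l r)) :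
    Irr (PBT.node l r) ↔ Irr l ∧ 1 < leavesCount r :=
  stmt3_general l r
end

section
/- Let (P, ≤) be a finite lattice and P′ ⊆ P a subset closed under binary infima. Suppose p₀ ∈ P′ is such that every element covered by p₀ belongs to P′. Then the Möbius function satisfies μ(q, p₀) = 0 for every q ∉ P′. -/
/-!
Induct downwards on `q`. For `q < p₀` with `q ∉ P'`, let `c` be the least element of `P'` in
`[q, p₀]`; it exists because `P'` is closed under infima, and `c < p₀` because some element
covered by `p₀` lies above `q` and belongs to `P'`. Every `w ∈ (q, p₀]` with `c ≰ w` is outside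
`P'`, so `μ w p₀ = 0` by induction; hence the defining sum over `[q, p₀]` equals
`μ q p₀` plus the (vanishing) defining sum over `[c, p₀]`.
-/

open Finset

lemma infClosed_Icc {α : Type*} [SemilatticeInf α] (a b : α) : InfClosed (Set.Icc a b) :=
  fun _ hx _ hy ↦ ⟨le_inf hx.1 hy.1, inf_le_of_left_le hx.2⟩

lemma InfClosed.exists_isLeast_of_finite {α : Type*} [SemilatticeInf α] {s : Set α}
    (hs : InfClosed s) (hfin : s.Finite) (hne : s.Nonempty) : ∃ c, IsLeast s c := by
  have hne' : hfin.toFinset.Nonempty := hfin.toFinset_nonempty.mpr hne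
  exact ⟨hfin.toFinset.inf' hne' id,
    hs.finsetInf'_mem hne' fun a ha ↦ hfin.mem_toFinset.mp ha,
    fun a ha ↦ inf'_le id (hfin.mem_toFinset.mpr ha)⟩

lemma moebius_eq_zero_of_support_subset_Ici {P : Type*} [Fintype P] [PartialOrder P]
    [DecidableRel (α := P) (· ≤ ·)] (μ : P → P → ℤ) {q c p : P}
    (hq : ∑ z ∈ univ.filter (fun z => q ≤ z ∧ z ≤ p), μ z p = 0)
    (hc : ∑ z ∈ univ.filter (fun z => c ≤ z ∧ z ≤ p), μ z p = 0)
    (hqc : q < c) (hcp : c ≤ p) (hsupp : ∀ w, q < w → w ≤ p → ¬ c ≤ w → μ w p = 0) :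
    μ q p = 0 := by
  classical
  set Iq := univ.filter (fun z => q ≤ z ∧ z ≤ p)
  set Ic := univ.filter (fun z => c ≤ z ∧ z ≤ p)
  have hqIq : q ∈ Iq := by simpa [Iq] using hqc.le.trans hcp
  have hIc : Ic ⊆ Iq.erase q := fun w hw ↦ by
    simp only [Ic, mem_filter, mem_univ, true_and] at hw
    simpa [Iq, hw.2] using ⟨(hqc.trans_le hw.1).ne', (hqc.trans_le hw.1).le⟩
  have hsum : ∑ w ∈ Iq.erase q, μ w p = ∑ w ∈ Ic, μ w p := by
    refine (sum_subset hIc fun w hw hwc ↦ ?_).symm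
    simp only [Iq, Ic, mem_erase, mem_filter, mem_univ, true_and] at hw hwc
    exact hsupp w (hw.2.1.lt_of_ne' hw.1) hw.2.2 fun h ↦ hwc ⟨h, hw.2.2⟩
  rwa [← add_sum_erase Iq _ hqIq, hsum, hc, add_zero] at hq

theorem stmt6_general {P : Type*} [Fintype P] [Lattice P]
    [DecidableRel (α := P) (· ≤ ·)]
    (P' : Set P)
    (hinf : ∀ a ∈ P', ∀ b ∈ P', a ⊓ b ∈ P')
    (p₀ : P) (hp₀ : p₀ ∈ P')
    (hcov : ∀ q : P, q ⋖ p₀ → q ∈ P')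
    (μ : P → P → ℤ)
    (hμzero : ∀ p q : P, ¬ p ≤ q → μ p q = 0)
    (hμsum : ∀ p q : P, p < q →
      (∑ z ∈ Finset.univ.filter (fun z => p ≤ z ∧ z ≤ q), μ z q) = 0) :
    ∀ q : P, q ∉ P' → μ q p₀ = 0 := by
  intro q
  induction q using WellFoundedGT.induction with | _ q ih => ?_
  intro hq
  by_cases hle : q ≤ p₀
  swap
  · exact hμzero q p₀ hle
  have hlt : q < p₀ := hle.lt_of_ne (by rintro rfl; exact hq hp₀)
  have hs : InfClosed (P' ∩ Set.Icc q p₀) :=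
    InfClosed.inter (fun a ha b hb ↦ hinf a ha b hb) (infClosed_Icc q p₀)
  obtain ⟨c, ⟨hcP', hqc, -⟩, hleast⟩ :=
    hs.exists_isLeast_of_finite (Set.toFinite _) ⟨p₀, hp₀, hle, le_rfl⟩
  obtain ⟨z, hqz, hz⟩ := exists_le_covBy_of_lt hlt
  have hcz : c ≤ z := hleast ⟨hcov z hz, hqz, hz.le⟩
  have hcp : c < p₀ := hcz.trans_lt hz.lt
  refine moebius_eq_zero_of_support_subset_Ici μ (hμsum q p₀ hlt) (hμsum c p₀ hcp)
    (hqc.lt_of_ne (by rintro rfl; exact hq hcP')) hcp.le fun w hqw hwp hcw ↦ ?_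
  exact ih w hqw fun hw ↦ hcw (hleast ⟨hw, hqw.le, hwp⟩)

/-- Let `P` be a finite lattice, `P'` a subset closed under binary infima and
`p₀ ∈ P'` an element such that every element covered by `p₀` belongs to `P'`.
Then the Möbius function `μ` of `P` (defined by `μ p p = 1`,
`Σ_{p ≤ z ≤ q} μ z q = 0` for `p < q`, and `μ p q = 0` when `¬ p ≤ q`)
satisfies `μ q p₀ = 0` for every `q ∉ P'`. -/
theorem stmt6 {P : Type*} [Fintype P] [Lattice P]
    [DecidableRel (α := P) (· ≤ ·)]
    (P' : Set P)
    (hinf : ∀ a ∈ P', ∀ b ∈ P', a ⊓ b ∈ P')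
    (p₀ : P) (hp₀ : p₀ ∈ P')
    (hcov : ∀ q : P, q ⋖ p₀ → q ∈ P')
    (μ : P → P → ℤ)
    (hμrefl : ∀ p : P, μ p p = 1)
    (hμzero : ∀ p q : P, ¬ p ≤ q → μ p q = 0)
    (hμsum : ∀ p q : P, p < q →
      (∑ z ∈ Finset.univ.filter (fun z => p ≤ z ∧ z ≤ q), μ z q) = 0) :
    ∀ q : P, q ∉ P' → μ q p₀ = 0 :=
  stmt6_general P' hinf p₀ hp₀ hcov μ hμzero hμsum
end

section
/- In the Tamari lattice on trees with n leaves, if t ≤ w with t = t₀ ∘ (t₁,…,t_r) and w = w₀ ∘ (w₁,…,w_r) where t₀, w₀ have r leaves and tᵢ, wᵢ have nᵢ leaves for each i, then t₀ ≤ w₀ and tᵢ ≤ wᵢ for all 1 ≤ i ≤ r. -/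
/-!
The bracket vector of Huang and Tamari turns the Tamari order into the componentwise order:
`t ≤ w` iff `bracket t ≤ bracket w`. The harder implication goes by induction: rotate `t` until
its left subtree has as many leaves as that of `w`, which changes a single entry of the bracket
vector, and compare the two pairs of subtrees.

The bracket vector of `t₀ ∘ (t₁, …, t_r)` contains the bracket vector of each `tᵢ` in the block
of positions of its leaves, and at the separator before block `j + 1` it contains the total size
of the blocks `j + 1, …, j + bracket t₀ j`. Since the partial sums of the sizes `nᵢ` are strictly
increasing, the componentwise inequality for the two graftings restricts to every block and
determines the inequality between the bracket vectors of `t₀` and `w₀`.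
-/

open Classical

/-- One covering move of the Tamari order: a right rotation
`(a ∨ b) ∨ c ↦ a ∨ (b ∨ c)` applied at some internal node. -/
inductive TStep : PBT → PBT → Prop
  | rot (a b c : PBT) : TStep (.node (.node a b) c) (.node a (.node b c))
  | left {a a' : PBT} (c : PBT) : TStep a a' → TStep (.node a c) (.node a' c)
  | right (a : PBT) {c c' : PBT} : TStep c c' → TStep (.node a c) (.node a c')

/-- The Tamari order on planar binary rooted trees: the reflexive transitive
closure of the rotation moves. -/
def tle : PBT → PBT → Prop := Relation.ReflTransGen TStep

/-- Auxiliary function: graft trees from the list `ws` onto the leaves of `t`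
from left to right, returning the resulting tree and the unused trees. -/
def graftAux : PBT → List PBT → PBT × List PBT
  | .leaf, [] => (.leaf, [])
  | .leaf, w :: ws => (w, ws)
  | .node l r, ws =>
      let p := graftAux l ws
      let q := graftAux r p.2
      (.node p.1 q.1, q.2)

/-- The grafting `t ∘ (w₁, …, w_r)`: graft the trees of the list `ws`
onto the leaves of `t`, from left to right. -/
def graftMany (t : PBT) (ws : List PBT) : PBT := (graftAux t ws).1

lemma leavesCount_pos (t : PBT) : 0 < leavesCount t := by
  induction t with
  | leaf => exact Nat.one_pos
  | node l r ihl _ => simp only [leavesCount]; omega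

lemma TStep.leavesCount_eq {t w : PBT} (h : TStep t w) : leavesCount t = leavesCount w := by
  induction h with
  | rot => simp only [leavesCount]; omega
  | left _ _ ih | right _ _ ih => simp only [leavesCount, ih]

lemma tle.leavesCount_eq {t w : PBT} (h : tle t w) : leavesCount t = leavesCount w := by
  induction h with
  | refl => rfl
  | tail _ hs ih => exact ih.trans hs.leavesCount_eq

lemma tle.trans {t u w : PBT} (h₁ : tle t u) (h₂ : tle u w) : tle t w :=
  Relation.ReflTransGen.trans h₁ h₂

lemma tle_node {a a' b b' : PBT} (ha : tle a a') (hb : tle b b') :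
    tle (.node a b) (.node a' b') :=
  tle.trans (ha.lift (fun x => PBT.node x b) fun _ _ => TStep.left b)
    (hb.lift (fun y => PBT.node a' y) fun _ _ => TStep.right a')

/-- The bracket vector of Huang and Tamari: `bracket t i` is the number of leaves of the largest
subtree of `t` whose leftmost leaf is leaf `i + 1` of `t` (leaves numbered from `0`). -/
def bracket : PBT → ℕ → ℕ
  | .leaf, _ => 0
  | .node l r, i =>
      if i + 1 < leavesCount l then bracket l i
      else if i + 1 = leavesCount l then leavesCount r
      else bracket r (i - leavesCount l)

lemma bracket_node_of_lt {l : PBT} (r : PBT) {i : ℕ} (h : i + 1 < leavesCount l) :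
    bracket (.node l r) i = bracket l i := by
  simp [bracket, h]

lemma bracket_node_pred (l r : PBT) : bracket (.node l r) (leavesCount l - 1) = leavesCount r := by
  have := leavesCount_pos l
  simp [bracket, Nat.sub_add_cancel this]

lemma bracket_node_add (l r : PBT) (i : ℕ) :
    bracket (.node l r) (leavesCount l + i) = bracket r i := by
  simp only [bracket]
  rw [if_neg (by omega), if_neg (by omega), Nat.add_sub_cancel_left]

lemma bracket_le_sub (t : PBT) (i : ℕ) : bracket t i ≤ leavesCount t - 1 - i := by
  induction t generalizing i with
  | leaf => simp [bracket]
  | node l r ihl ihr =>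
    have := ihl i
    have := ihr (i - leavesCount l)
    simp only [bracket, leavesCount]
    split_ifs <;> omega

lemma bracket_eq_zero {t : PBT} {i : ℕ} (h : leavesCount t ≤ i + 1) : bracket t i = 0 := by
  have := bracket_le_sub t i
  omega

lemma bracket_node_left_congr {x y : PBT} (b : PBT) {i : ℕ} (hxy : leavesCount x = leavesCount y)
    (hi : bracket x i = bracket y i) : bracket (.node x b) i = bracket (.node y b) i := by
  simp only [bracket, hxy, hi]

lemma bracket_rot_of_ne (a b c : PBT) {i : ℕ} (hi : i ≠ leavesCount a - 1) :
    bracket (.node a (.node b c)) i = bracket (.node (.node a b) c) i := by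
  have hab : leavesCount (.node a b) = leavesCount a + leavesCount b := rfl
  rcases lt_or_ge (i + 1) (leavesCount a) with h | h
  · rw [bracket_node_of_lt _ h, bracket_node_of_lt _ (by omega), bracket_node_of_lt _ h]
  obtain ⟨j, rfl⟩ : ∃ j, i = leavesCount a + j := ⟨i - leavesCount a, by omega⟩
  rw [bracket_node_add]
  rcases lt_trichotomy (j + 1) (leavesCount b) with h | h | h
  · rw [bracket_node_of_lt _ h, bracket_node_of_lt _ (by omega), bracket_node_add]
  · rw [show j = leavesCount b - 1 by omega, bracket_node_pred,
      show leavesCount a + (leavesCount b - 1) = leavesCount (.node a b) - 1 by omega,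
      bracket_node_pred]
  · obtain ⟨k, rfl⟩ : ∃ k, j = leavesCount b + k := ⟨j - leavesCount b, by omega⟩
    rw [bracket_node_add, ← Nat.add_assoc, ← hab, bracket_node_add]

lemma TStep.bracket_le {t w : PBT} (h : TStep t w) : bracket t ≤ bracket w := by
  induction h with
  | rot a b c =>
    intro i
    by_cases hi : i = leavesCount a - 1
    · have := leavesCount_pos a
      have := leavesCount_pos b
      rw [hi, bracket_node_pred, bracket_node_of_lt c (by simp only [leavesCount]; omega),
        bracket_node_pred]
      simp only [leavesCount]; omega
    · exact (bracket_rot_of_ne a b c hi).ge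
  | @left a a' c hs ih =>
    intro i
    have := hs.leavesCount_eq
    simp only [bracket, this]
    split_ifs <;> first | exact ih i | rfl
  | @right a c c' hs ih =>
    intro i
    simp only [bracket, hs.leavesCount_eq]
    split_ifs <;> first | exact ih _ | rfl

lemma tle.bracket_le {t w : PBT} (h : tle t w) : bracket t ≤ bracket w := by
  induction h with
  | refl => rfl
  | tail _ hs ih => exact ih.trans hs.bracket_le

lemma bracket_le_of_bracket_node_le {a b c d : PBT} (hac : leavesCount a = leavesCount c)
    (h : bracket (.node a b) ≤ bracket (.node c d)) :
    bracket a ≤ bracket c ∧ bracket b ≤ bracket d := by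
  refine ⟨fun i => ?_, fun i => ?_⟩
  · rcases lt_or_ge (i + 1) (leavesCount a) with hi | hi
    · have := h i
      rwa [bracket_node_of_lt b hi, bracket_node_of_lt d (hac ▸ hi)] at this
    · rw [bracket_eq_zero hi]
      exact Nat.zero_le _
  · have := h (leavesCount a + i)
    rwa [bracket_node_add, hac, bracket_node_add] at this

/-- The hypothesis says that no bracket starting among the first `m` leaves of `a` reaches beyond
leaf `m - 1`. -/
lemma exists_tle_node_leavesCount_left {m : ℕ} (hm : 0 < m) :
    ∀ {a : PBT}, m < leavesCount a → (∀ i, i + 1 < m → bracket a i ≤ m - 1 - i) →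
      ∃ p q, tle a (.node p q) ∧ leavesCount p = m ∧
        ∀ i, i ≠ m - 1 → bracket (.node p q) i = bracket a i
  | .leaf, hma, _ => by simp only [leavesCount] at hma; omega
  | .node a₁ a₂, hma, hsmall => by
    have hm₁ : m ≤ leavesCount a₁ := by
      by_contra! hlt
      have := leavesCount_pos a₁
      have := hsmall (leavesCount a₁ - 1) (by omega)
      rw [bracket_node_pred] at this
      simp only [leavesCount] at hma
      omega
    rcases hm₁.eq_or_lt with rfl | hlt
    · exact ⟨a₁, a₂, .refl, rfl, fun _ _ => rfl⟩
    obtain ⟨p, q, hpq, hp, hbr⟩ := exists_tle_node_leavesCount_left hm hlt fun i hi => by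
      rw [← bracket_node_of_lt a₂ (by omega)]
      exact hsmall i hi
    refine ⟨p, .node q a₂, (tle_node hpq .refl).tail (.rot p q a₂), hp, fun i hi => ?_⟩
    rw [bracket_rot_of_ne p q a₂ (hp ▸ hi)]
    exact bracket_node_left_congr a₂ hpq.leavesCount_eq.symm (hbr i hi)

/-- Hard direction of the Huang–Tamari theorem. -/
theorem tle_of_bracket_le {t w : PBT} (hn : leavesCount t = leavesCount w)
    (hb : bracket t ≤ bracket w) : tle t w := by
  cases w with
  | leaf =>
    cases t with
    | leaf => exact .refl
    | node a b =>
      have := leavesCount_pos a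
      have := leavesCount_pos b
      simp only [leavesCount] at hn
      omega
  | node c d =>
    have hc := leavesCount_pos c
    have hd := leavesCount_pos d
    have hcd : leavesCount (.node c d) = leavesCount c + leavesCount d := rfl
    obtain ⟨p, q, htpq, hp, hbr⟩ := exists_tle_node_leavesCount_left hc (a := t) (by omega)
      fun i hi => (hb i).trans <| by
        rw [bracket_node_of_lt d hi]
        exact bracket_le_sub c i
    have hq : leavesCount q = leavesCount d := by
      have := htpq.leavesCount_eq
      simp only [leavesCount] at this hn
      omega
    have hb' : bracket (.node p q) ≤ bracket (.node c d) := fun i => by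
      by_cases hi : i = leavesCount c - 1
      · rw [hi, ← hp, bracket_node_pred, hp, bracket_node_pred, hq]
      · exact hbr i hi ▸ hb i
    obtain ⟨hpc, hqd⟩ := bracket_le_of_bracket_node_le hp hb'
    have : leavesCount p < leavesCount t := by omega
    have : leavesCount q < leavesCount t := by omega
    exact htpq.trans (tle_node (tle_of_bracket_le hp hpc) (tle_of_bracket_le hq hqd))
termination_by leavesCount t

def leavesBefore (ws : List PBT) (k : ℕ) : ℕ := ((ws.map leavesCount).take k).sum

lemma leavesBefore_add (ws : List PBT) (a k : ℕ) :
    leavesBefore ws (a + k) = leavesBefore ws a + leavesBefore (ws.drop a) k := by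
  rw [leavesBefore, List.take_add, List.sum_append, leavesBefore, leavesBefore, List.map_drop]

lemma leavesBefore_succ {ws : List PBT} {k : ℕ} {u : PBT} (hu : ws[k]? = some u) :
    leavesBefore ws (k + 1) = leavesBefore ws k + leavesCount u := by
  rw [leavesBefore_add]
  obtain ⟨hk, rfl⟩ := List.getElem?_eq_some_iff.mp hu
  rw [List.drop_eq_getElem_cons hk]
  simp only [leavesBefore, List.map_cons, List.take_succ_cons, List.take_zero, List.sum_cons,
    List.sum_nil, add_zero]

lemma leavesBefore_lt_leavesBefore {ws : List PBT} {a b : ℕ} (hab : a < b)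
    (hb : b ≤ ws.length) :
    leavesBefore ws a < leavesBefore ws b := by
  have hu : ws[a]? = some ws[a] := List.getElem?_eq_getElem (by omega)
  have := leavesCount_pos ws[a]
  rw [show b = a + 1 + (b - (a + 1)) by omega, leavesBefore_add, leavesBefore_succ hu]
  omega

lemma leavesBefore_pos {ws : List PBT} {k : ℕ} (hk : 0 < k) (hk' : k ≤ ws.length) :
    0 < leavesBefore ws k := by
  simpa [leavesBefore] using leavesBefore_lt_leavesBefore hk hk'

lemma leavesBefore_mono (ws : List PBT) {a b : ℕ} (hab : a ≤ b) :
    leavesBefore ws a ≤ leavesBefore ws b := by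
  rw [show b = a + (b - a) by omega, leavesBefore_add]
  exact Nat.le_add_right _ _

lemma le_of_leavesBefore_le {ws : List PBT} {a b : ℕ} (ha : a ≤ ws.length)
    (h : leavesBefore ws a ≤ leavesBefore ws b) : a ≤ b := by
  by_contra! hba
  exact (leavesBefore_lt_leavesBefore hba ha).not_ge h

lemma graftAux_snd {t : PBT} {ws : List PBT} (h : leavesCount t ≤ ws.length) :
    (graftAux t ws).2 = ws.drop (leavesCount t) := by
  induction t generalizing ws with
  | leaf =>
    obtain ⟨w, ws, rfl⟩ := List.exists_cons_of_length_pos h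
    rfl
  | node l r ihl ihr =>
    simp only [leavesCount] at h
    simp only [graftAux, leavesCount]
    rw [ihl (by omega), ihr (by simp only [List.length_drop]; omega), List.drop_drop]

lemma graftMany_node {l r : PBT} {ws : List PBT} (h : leavesCount l ≤ ws.length) :
    graftMany (.node l r) ws = .node (graftMany l ws) (graftMany r (ws.drop (leavesCount l))) := by
  simp only [graftMany, graftAux, graftAux_snd h]

lemma leavesCount_graftMany {t : PBT} {ws : List PBT} (h : leavesCount t ≤ ws.length) :
    leavesCount (graftMany t ws) = leavesBefore ws (leavesCount t) := by
  induction t generalizing ws with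
  | leaf =>
    obtain ⟨w, ws, rfl⟩ := List.exists_cons_of_length_pos h
    simp [graftMany, graftAux, leavesBefore, leavesCount]
  | node l r ihl ihr =>
    simp only [leavesCount] at h
    rw [graftMany_node (by omega), leavesCount, ihl (by omega),
      ihr (by simp only [List.length_drop]; omega), leavesCount, leavesBefore_add]

lemma bracket_graftMany_block {t : PBT} {ws : List PBT} {j i : ℕ} {u : PBT}
    (h : leavesCount t ≤ ws.length) (hj : j < leavesCount t) (hu : ws[j]? = some u)
    (hi : i + 1 < leavesCount u) :
    bracket (graftMany t ws) (leavesBefore ws j + i) = bracket u i := by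
  induction t generalizing ws j with
  | leaf =>
    obtain rfl : j = 0 := by simp only [leavesCount] at hj; omega
    obtain ⟨w, ws, rfl⟩ := List.exists_cons_of_length_pos h
    obtain rfl : w = u := by simpa using hu
    simp [graftMany, graftAux, leavesBefore]
  | node l r ihl ihr =>
    simp only [leavesCount] at h hj
    rw [graftMany_node (by omega)]
    rcases lt_or_ge j (leavesCount l) with hjl | hjl
    · have := leavesBefore_mono ws hjl
      rw [leavesBefore_succ hu] at this
      rw [bracket_node_of_lt _ (by rw [leavesCount_graftMany (by omega)]; omega)]
      exact ihl (by omega) hjl hu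
    · obtain ⟨k, rfl⟩ : ∃ k, j = leavesCount l + k := ⟨j - leavesCount l, by omega⟩
      rw [leavesBefore_add, ← leavesCount_graftMany (by omega), Nat.add_assoc,
        bracket_node_add]
      exact ihr (by simp only [List.length_drop]; omega) (by omega)
        (by rwa [List.getElem?_drop])

lemma bracket_graftMany_sep {t : PBT} {ws : List PBT} {j : ℕ} (h : leavesCount t ≤ ws.length)
    (hj : j + 1 < leavesCount t) :
    bracket (graftMany t ws) (leavesBefore ws (j + 1) - 1) =
      leavesBefore ws (j + 1 + bracket t j) - leavesBefore ws (j + 1) := by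
  induction t generalizing ws j with
  | leaf => simp only [leavesCount] at hj; omega
  | node l r ihl ihr =>
    simp only [leavesCount] at h hj
    have hL := leavesCount_graftMany (ws := ws) (t := l) (by omega)
    rw [graftMany_node (by omega)]
    rcases lt_trichotomy (j + 1) (leavesCount l) with hjl | hjl | hjl
    · have := leavesBefore_pos (ws := ws) (by omega : 0 < j + 1) (by omega)
      have := leavesBefore_lt_leavesBefore (ws := ws) hjl (by omega)
      rw [bracket_node_of_lt _ (by omega), bracket_node_of_lt _ hjl]
      exact ihl (by omega) hjl
    · have hR := leavesCount_graftMany (ws := ws.drop (leavesCount l)) (t := r)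
        (by simp only [List.length_drop]; omega)
      have := leavesBefore_add ws (leavesCount l) (leavesCount r)
      rw [hjl, ← hL, bracket_node_pred, hR, show j = leavesCount l - 1 by omega,
        bracket_node_pred, hL]
      omega
    · obtain ⟨k, rfl⟩ : ∃ k, j = leavesCount l + k := ⟨j - leavesCount l, by omega⟩
      set ws' := ws.drop (leavesCount l)
      have hws' : leavesCount r ≤ ws'.length := by simp only [ws', List.length_drop]; omega
      have := leavesBefore_pos (ws := ws') (by omega : 0 < k + 1) (by omega)
      have e₁ : leavesBefore ws (leavesCount l + k + 1) =
          leavesBefore ws (leavesCount l) + leavesBefore ws' (k + 1) := by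
        rw [Nat.add_assoc, leavesBefore_add]
      have e₂ : leavesBefore ws (leavesCount l + k + 1 + bracket r k) =
          leavesBefore ws (leavesCount l) + leavesBefore ws' (k + 1 + bracket r k) := by
        rw [Nat.add_assoc, Nat.add_assoc, leavesBefore_add, Nat.add_assoc]
      have hidx : leavesBefore ws (leavesCount l + k + 1) - 1 =
          leavesCount (graftMany l ws) + (leavesBefore ws' (k + 1) - 1) := by
        omega
      rw [bracket_node_add, hidx, bracket_node_add, ihr hws' (by omega)]
      omega

lemma leavesBefore_eq_of_forall₂ {ts ws : List PBT}
    (h : List.Forall₂ (fun a b => leavesCount a = leavesCount b) ts ws) :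
    leavesBefore ts = leavesBefore ws := by
  have hmap : ts.map leavesCount = ws.map leavesCount := by
    rw [← List.forall₂_eq_eq_eq, List.forall₂_map_left_iff, List.forall₂_map_right_iff]
    exact h
  funext k
  simp only [leavesBefore, hmap]

section Graft

variable {t₀ w₀ : PBT} {ts ws : List PBT}

lemma bracket_le_of_bracket_graftMany_le (hts : ts.length = leavesCount t₀)
    (hws : ws.length = leavesCount w₀) (hr : leavesCount t₀ = leavesCount w₀)
    (hlb : leavesBefore ts = leavesBefore ws)
    (h : bracket (graftMany t₀ ts) ≤ bracket (graftMany w₀ ws)) :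
    bracket t₀ ≤ bracket w₀ := by
  intro j
  rcases lt_or_ge (j + 1) (leavesCount t₀) with hj | hj
  · have hsep := h (leavesBefore ts (j + 1) - 1)
    beta_reduce at hsep
    rw [bracket_graftMany_sep hts.ge hj, hlb, bracket_graftMany_sep hws.ge (hr ▸ hj), ← hlb]
      at hsep
    have := leavesBefore_mono ts (Nat.le_add_right (j + 1) (bracket t₀ j))
    have := leavesBefore_mono ts (Nat.le_add_right (j + 1) (bracket w₀ j))
    have := bracket_le_sub t₀ j
    have := le_of_leavesBefore_le (ws := ts) (a := j + 1 + bracket t₀ j)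
      (b := j + 1 + bracket w₀ j) (by omega) (by omega)
    exact Nat.le_of_add_le_add_left this
  · rw [bracket_eq_zero hj]
    exact Nat.zero_le _

lemma bracket_getElem_le_of_bracket_graftMany_le (hts : ts.length = leavesCount t₀)
    (hws : ws.length = leavesCount w₀) (hlb : leavesBefore ts = leavesBefore ws) {j : ℕ}
    (hj : j < ts.length) (hj' : j < ws.length) (hsize : leavesCount ts[j] = leavesCount ws[j])
    (h : bracket (graftMany t₀ ts) ≤ bracket (graftMany w₀ ws)) :
    bracket ts[j] ≤ bracket ws[j] := by
  intro i
  rcases lt_or_ge (i + 1) (leavesCount ts[j]) with hi | hi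
  · have hblock := h (leavesBefore ts j + i)
    rwa [bracket_graftMany_block hts.ge (hts ▸ hj) (List.getElem?_eq_getElem hj) hi, hlb,
      bracket_graftMany_block hws.ge (hws ▸ hj') (List.getElem?_eq_getElem hj') (hsize ▸ hi)]
      at hblock
  · rw [bracket_eq_zero hi]
    exact Nat.zero_le _

end Graft

theorem stmt7_general (t0 w0 : PBT) (ts ws : List PBT)
    (hlen : ts.length = leavesCount t0)
    (hr : leavesCount t0 = leavesCount w0)
    (hsz : List.Forall₂ (fun a b => leavesCount a = leavesCount b) ts ws)
    (h : tle (graftMany t0 ts) (graftMany w0 ws)) :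
    tle t0 w0 ∧ List.Forall₂ tle ts ws := by
  have hlen' : ws.length = leavesCount w0 := hsz.length_eq ▸ hlen.trans hr
  have hlb := leavesBefore_eq_of_forall₂ hsz
  have hb := h.bracket_le
  refine ⟨tle_of_bracket_le hr (bracket_le_of_bracket_graftMany_le hlen hlen' hr hlb hb), ?_⟩
  rw [List.forall₂_iff_get] at hsz ⊢
  refine ⟨hsz.1, fun j hj hj' => ?_⟩
  simp only [List.get_eq_getElem] at hsz ⊢
  exact tle_of_bracket_le (hsz.2 j hj hj')
    (bracket_getElem_le_of_bracket_graftMany_le hlen hlen' hlb hj hj' (hsz.2 j hj hj') hb)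

/-- If `t₀ ∘ (t₁,…,t_r) ≤_T w₀ ∘ (w₁,…,w_r)` with `t₀, w₀` having `r` leaves
and `tᵢ, wᵢ` having the same number of leaves for each `i`, then `t₀ ≤_T w₀`
and `tᵢ ≤_T wᵢ` for all `i`. -/
theorem stmt7 (t0 w0 : PBT) (ts ws : List PBT)
    (hlen : ts.length = leavesCount t0) (hlen' : ws.length = leavesCount w0)
    (hr : leavesCount t0 = leavesCount w0)
    (hsz : List.Forall₂ (fun a b => leavesCount a = leavesCount b) ts ws)
    (h : tle (graftMany t0 ts) (graftMany w0 ws)) :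
    tle t0 w0 ∧ List.Forall₂ tle ts ws :=
  stmt7_general t0 w0 ts ws hlen hr hsz h
end
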